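/- Let p > 2 and s > 0, and consider the system in (t_−, t_+) ∈ (0,1)²: t_+(1−t_+²)^{1/(p−2)} = t_−(1−t_−²)^{1/(p−2)} and 1/t_+ + 1/t_− = s. Then: (a) if s ≤ 2 the system has no solutions; (b) if 2 < s ≤ 2√(p/(p−2)) the system has exactly one solution, namely t_− = t_+ = 2/s; (c) if s > 2√(p/(p−2)) the system has exactly three solutions: t_− = t_+ = 2/s and two further solutions of the form (t₁, t₂), (t₂, t₁) with t₁ ≠ t₂. -/

import Mathlib

/-!
Put `u = 1/t₋`, `v = 1/t₊` and `c = p/(p-2)`. Since `log (t (1-t²)^{1/(p-2)}) = L (1/t)` with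
`L u = (c-1)/2 · log (u²-1) - c log u`, the system says `u, v > 1`, `u + v = s`, `L u = L v`.
Off-diagonal solutions therefore correspond to zeros in `(1, s/2)` of `G u = L u - L (s-u)`,
which vanishes at `s/2` and tends to `-∞` at `1⁺`. The derivative of `G` has the sign of
`Q u = c (s²-1) - (3c-1) m - m²` with `m = u (s-u)`, and `Q` decreases on `[1, s/2]` from
`(s-1)(s-2)(c-1) > 0` to `-(s²-4)(s²-4c)/16`. If `s² ≤ 4c`, `G` increases on `(1, s/2]` and has no
zero there before `s/2`; if `s² > 4c`, `G` increases and then decreases, so it has exactly one.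
-/

open Set

/-- The system in `(t₋, t₊) ∈ (0,1)²`:
`t₊(1−t₊²)^{1/(p−2)} = t₋(1−t₋²)^{1/(p−2)}` and `1/t₊ + 1/t₋ = s`. -/
def SignSys (p s tm tp : ℝ) : Prop :=
  tm ∈ Ioo (0 : ℝ) 1 ∧ tp ∈ Ioo (0 : ℝ) 1 ∧
    tp * (1 - tp ^ 2) ^ (1 / (p - 2)) = tm * (1 - tm ^ 2) ^ (1 / (p - 2)) ∧
    1 / tp + 1 / tm = s

open Filter Topology Real

theorem exists_unique_zero_of_strictMonoOn_of_strictAntiOn {f : ℝ → ℝ} {a m b : ℝ}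
    (ham : a < m) (hmb : m < b) (hf : ContinuousOn f (Ioc a m))
    (hmono : StrictMonoOn f (Ioc a m)) (hanti : StrictAntiOn f (Icc m b)) (hfb : f b = 0)
    (hlim : Tendsto f (𝓝[>] a) atBot) :
    ∃ x ∈ Ioo a m, ∀ y ∈ Ioo a b, f y = 0 ↔ y = x := by
  have pos_of_mem : ∀ y ∈ Ico m b, 0 < f y := fun y hy =>
    hfb ▸ hanti ⟨hy.1, hy.2.le⟩ ⟨hmb.le, le_rfl⟩ hy.2
  obtain ⟨a', hfa', ha'⟩ :=
    ((hlim.eventually (eventually_lt_atBot 0)).and (Ioo_mem_nhdsGT ham)).exists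
  obtain ⟨x, hx, hfx⟩ := intermediate_value_Ioo ha'.2.le
    (hf.mono (Icc_subset_Ioc ha'.1 le_rfl)) ⟨hfa', pos_of_mem m ⟨le_rfl, hmb⟩⟩
  have hxm : x ∈ Ioo a m := ⟨ha'.1.trans hx.1, hx.2⟩
  refine ⟨x, hxm, fun y hy => ⟨fun hfy => ?_, fun hyx => hyx ▸ hfx⟩⟩
  have hym : y < m := not_le.mp fun h => (pos_of_mem y ⟨h, hy.2⟩).ne' hfy
  exact hmono.injOn ⟨hy.1, hym.le⟩ ⟨hxm.1, hxm.2.le⟩ (hfy.trans hfx.symm)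

namespace SignSys

noncomputable def profile (c u : ℝ) : ℝ :=
  (c - 1) / 2 * log (u ^ 2 - 1) - c * log u

theorem mul_rpow_eq_exp_profile (c : ℝ) {t : ℝ} (ht : t ∈ Ioo (0 : ℝ) 1) :
    t * (1 - t ^ 2) ^ ((c - 1) / 2) = exp (profile c t⁻¹) := by
  have ht0 : t ≠ 0 := ht.1.ne'
  have h1 : 0 < 1 - t ^ 2 := by nlinarith [ht.1, ht.2]
  have hlog : log (t⁻¹ ^ 2 - 1) = log (1 - t ^ 2) - 2 * log t := by
    rw [show t⁻¹ ^ 2 - 1 = (1 - t ^ 2) / t ^ 2 by field_simp,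
      log_div h1.ne' (pow_ne_zero 2 ht0), log_pow]
    push_cast; ring
  rw [rpow_def_of_pos h1, profile, hlog, log_inv,
    show (c - 1) / 2 * (log (1 - t ^ 2) - 2 * log t) - c * -log t
      = log t + log (1 - t ^ 2) * ((c - 1) / 2) by ring, exp_add, exp_log ht.1]

theorem hasDerivAt_profile (c : ℝ) {u : ℝ} (hu : 1 < u) :
    HasDerivAt (profile c) ((c - u ^ 2) / (u * (u ^ 2 - 1))) u := by
  have hu0 : 0 < u := one_pos.trans hu
  have hu1 : 0 < u ^ 2 - 1 := by nlinarith
  have hsq : HasDerivAt (fun x : ℝ => x ^ 2 - 1) (2 * u) u := by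
    simpa using (hasDerivAt_pow 2 u).sub_const 1
  refine (((hsq.log hu1.ne').const_mul ((c - 1) / 2)).sub
    ((hasDerivAt_log hu0.ne').const_mul c)).congr_deriv ?_
  field_simp
  ring

theorem tendsto_profile_nhdsGT_one {c : ℝ} (hc : 1 < c) :
    Tendsto (profile c) (𝓝[>] 1) atBot := by
  have hsq : Tendsto (fun u : ℝ => u ^ 2 - 1) (𝓝[>] 1) (𝓝[>] 0) := by
    have h : ContinuousWithinAt (fun u : ℝ => u ^ 2 - 1) (Ioi 1) 1 := by fun_prop
    convert h.tendsto_nhdsWithin (t := Ioi 0) fun u (hu : 1 < u) => show 0 < u ^ 2 - 1 by nlinarith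
    norm_num
  have hlog : Tendsto (fun u => -(c * log u)) (𝓝[>] 1) (𝓝 (-(c * log 1))) :=
    (((continuousAt_log one_ne_zero).const_mul c).neg).tendsto.mono_left nhdsWithin_le_nhds
  rw [log_one, mul_zero, neg_zero] at hlog
  exact ((tendsto_log_nhdsGT_zero.comp hsq).const_mul_atBot (by linarith)).atBot_add hlog

noncomputable def profileGap (c s u : ℝ) : ℝ :=
  profile c u - profile c (s - u)

def gapDerivNum (c s u : ℝ) : ℝ :=
  c * (s ^ 2 - 1) - (3 * c - 1) * (u * (s - u)) - (u * (s - u)) ^ 2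

theorem hasDerivAt_profileGap (c s : ℝ) {u : ℝ} (hu : 1 < u) (hv : 1 < s - u) :
    HasDerivAt (profileGap c s)
      (s * gapDerivNum c s u / (u * (u ^ 2 - 1) * ((s - u) * ((s - u) ^ 2 - 1)))) u := by
  have hu0 : 0 < u := one_pos.trans hu
  have hv0 : 0 < s - u := one_pos.trans hv
  have hu1 : 0 < u ^ 2 - 1 := by nlinarith
  have hv1 : 0 < (s - u) ^ 2 - 1 := by nlinarith
  refine ((hasDerivAt_profile c hu).sub
    ((hasDerivAt_profile c hv).comp u ((hasDerivAt_id u).const_sub s))).congr_deriv ?_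
  simp only [gapDerivNum]
  field_simp
  ring

theorem mul_sq_sub_one_mul_pos {u v : ℝ} (hu : 1 < u) (hv : 1 < v) :
    0 < u * (u ^ 2 - 1) * (v * (v ^ 2 - 1)) := by
  have hu1 : 0 < u ^ 2 - 1 := by nlinarith
  have hv1 : 0 < v ^ 2 - 1 := by nlinarith
  exact mul_pos (mul_pos (by linarith) hu1) (mul_pos (by linarith) hv1)

theorem continuousAt_profileGap (c s : ℝ) {u : ℝ} (hu : 1 < u) (hv : 1 < s - u) :
    ContinuousAt (profileGap c s) u :=
  (hasDerivAt_profileGap c s hu hv).continuousAt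

theorem profileGap_half (c s : ℝ) : profileGap c s (s / 2) = 0 := by
  rw [profileGap, show s - s / 2 = s / 2 by ring, sub_self]

theorem strictMonoOn_profileGap {c s a : ℝ} (ha : a ≤ s / 2)
    (hnum : ∀ u ∈ Ioo 1 a, 0 < gapDerivNum c s u) :
    StrictMonoOn (profileGap c s) (Ioc 1 a) := by
  refine strictMonoOn_of_deriv_pos (convex_Ioc 1 a)
    (fun u hu => (continuousAt_profileGap c s hu.1 (by linarith [hu.1, hu.2])).continuousWithinAt)
    fun u hu => ?_
  rw [interior_Ioc] at hu
  rw [(hasDerivAt_profileGap c s hu.1 (by linarith [hu.1, hu.2])).deriv]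
  exact div_pos (mul_pos (by linarith [hu.1, hu.2]) (hnum u hu))
    (mul_sq_sub_one_mul_pos hu.1 (by linarith [hu.1, hu.2]))

theorem strictAntiOn_profileGap {c s a : ℝ} (ha : 1 < a)
    (hnum : ∀ u ∈ Ioo a (s / 2), gapDerivNum c s u < 0) :
    StrictAntiOn (profileGap c s) (Icc a (s / 2)) := by
  refine strictAntiOn_of_deriv_neg (convex_Icc a (s / 2))
    (fun u hu => (continuousAt_profileGap c s (by linarith [hu.1])
      (by linarith [hu.1, hu.2])).continuousWithinAt) fun u hu => ?_
  rw [interior_Icc] at hu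
  rw [(hasDerivAt_profileGap c s (by linarith [hu.1]) (by linarith [hu.1, hu.2])).deriv]
  exact div_neg_of_neg_of_pos (mul_neg_of_pos_of_neg (by linarith [hu.1, hu.2]) (hnum u hu))
    (mul_sq_sub_one_mul_pos (by linarith [hu.1]) (by linarith [hu.1, hu.2]))

theorem tendsto_profileGap_nhdsGT_one {c s : ℝ} (hc : 1 < c) (hs : 2 < s) :
    Tendsto (profileGap c s) (𝓝[>] 1) atBot := by
  have hcont : ContinuousAt (fun u => -profile c (s - u)) 1 :=
    ((hasDerivAt_profile c (by linarith : (1 : ℝ) < s - 1)).continuousAt.comp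
      (continuous_sub_left s).continuousAt).neg
  exact ((tendsto_profile_nhdsGT_one hc).atBot_add
    (hcont.tendsto.mono_left nhdsWithin_le_nhds)).congr fun u => (sub_eq_add_neg _ _).symm

theorem gapDerivNum_one (c s : ℝ) : gapDerivNum c s 1 = (s - 1) * (s - 2) * (c - 1) := by
  rw [gapDerivNum]; ring

theorem gapDerivNum_half (c s : ℝ) :
    gapDerivNum c s (s / 2) = -((s ^ 2 - 4) * (s ^ 2 - 4 * c)) / 16 := by
  rw [gapDerivNum]; ring

theorem strictAntiOn_gapDerivNum {c s : ℝ} (hc : 1 ≤ 3 * c) :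
    StrictAntiOn (gapDerivNum c s) (Icc 0 (s / 2)) := by
  intro u hu w hw huw
  have hm : u * (s - u) < w * (s - w) := by
    nlinarith [mul_pos (sub_pos.mpr huw) (show 0 < s - u - w by linarith [hw.2])]
  have hm0 : 0 ≤ u * (s - u) := mul_nonneg hu.1 (by linarith [hu.1, hu.2])
  simp only [gapDerivNum]
  nlinarith [mul_pos (sub_pos.mpr hm) (show 0 < 3 * c - 1 + u * (s - u) + w * (s - w) by linarith)]

theorem profileGap_neg {c s : ℝ} (hs : 2 < s) (hsc : s ^ 2 ≤ 4 * c) {u : ℝ}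
    (hu : u ∈ Ioo 1 (s / 2)) : profileGap c s u < 0 := by
  have hanti := strictAntiOn_gapDerivNum (c := c) (s := s) (by nlinarith)
  have hhalf : 0 ≤ gapDerivNum c s (s / 2) := by
    rw [gapDerivNum_half]
    exact div_nonneg (neg_nonneg.mpr (mul_nonpos_of_nonneg_of_nonpos (by nlinarith)
      (by linarith))) (by norm_num)
  have hmono := strictMonoOn_profileGap (le_refl (s / 2)) fun w hw =>
    hhalf.trans_lt (hanti ⟨by linarith [hw.1], hw.2.le⟩ ⟨by linarith, le_rfl⟩ hw.2)
  simpa only [profileGap_half] using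
    hmono ⟨hu.1, hu.2.le⟩ ⟨by linarith [hu.1, hu.2], le_rfl⟩ hu.2

theorem exists_gapDerivNum_sign_change {c s : ℝ} (hc : 1 < c) (hs : 2 < s)
    (hsc : 4 * c < s ^ 2) :
    ∃ u₀ ∈ Ioo 1 (s / 2), (∀ u ∈ Ioo 1 u₀, 0 < gapDerivNum c s u) ∧
      ∀ u ∈ Ioo u₀ (s / 2), gapDerivNum c s u < 0 := by
  have hanti := strictAntiOn_gapDerivNum (c := c) (s := s) (by linarith)
  have hcont : ContinuousOn (gapDerivNum c s) (Icc 1 (s / 2)) := by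
    unfold gapDerivNum; fun_prop
  have hone : 0 < gapDerivNum c s 1 := by
    rw [gapDerivNum_one]
    exact mul_pos (mul_pos (by linarith) (by linarith)) (by linarith)
  have hhalf : gapDerivNum c s (s / 2) < 0 := by
    rw [gapDerivNum_half]
    exact div_neg_of_neg_of_pos (neg_neg_of_pos (mul_pos (by nlinarith) (by linarith)))
      (by norm_num)
  obtain ⟨u₀, hu₀, hzero⟩ := intermediate_value_Ioo' (by linarith) hcont ⟨hhalf, hone⟩
  refine ⟨u₀, hu₀, fun u hu => ?_, fun u hu => ?_⟩
  · exact hzero ▸ hanti ⟨by linarith [hu.1], by linarith [hu.2, hu₀.2]⟩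
      ⟨by linarith [hu₀.1], hu₀.2.le⟩ hu.2
  · exact hzero ▸ hanti ⟨by linarith [hu₀.1], hu₀.2.le⟩
      ⟨by linarith [hu.1, hu₀.1], hu.2.le⟩ hu.1

theorem exists_unique_profileGap_eq_zero {c s : ℝ} (hc : 1 < c) (hs : 2 < s)
    (hsc : 4 * c < s ^ 2) :
    ∃ x ∈ Ioo 1 (s / 2), ∀ u ∈ Ioo 1 (s / 2), profileGap c s u = 0 ↔ u = x := by
  obtain ⟨u₀, hu₀, hpos, hneg⟩ := exists_gapDerivNum_sign_change hc hs hsc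
  obtain ⟨x, hx, hzero⟩ := exists_unique_zero_of_strictMonoOn_of_strictAntiOn hu₀.1 hu₀.2
    (fun u hu => (continuousAt_profileGap c s hu.1
      (by linarith [hu.1, hu.2, hu₀.2])).continuousWithinAt)
    (strictMonoOn_profileGap hu₀.2.le hpos) (strictAntiOn_profileGap hu₀.1 hneg)
    (profileGap_half c s) (tendsto_profileGap_nhdsGT_one hc hs)
  exact ⟨x, ⟨hx.1, hx.2.trans hu₀.2⟩, hzero⟩

def ProfileSys (c s u v : ℝ) : Prop :=
  1 < u ∧ 1 < v ∧ u + v = s ∧ profile c u = profile c v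

variable {c s u v : ℝ}

theorem ProfileSys.symm (h : ProfileSys c s u v) : ProfileSys c s v u :=
  ⟨h.2.1, h.1, by rw [add_comm, h.2.2.1], h.2.2.2.symm⟩

theorem ProfileSys.two_lt (h : ProfileSys c s u v) : 2 < s := by
  linarith [h.1, h.2.1, h.2.2.1]

theorem profileSys_half (hs : 2 < s) : ProfileSys c s (s / 2) (s / 2) :=
  ⟨by linarith, by linarith, by ring, rfl⟩

theorem profileSys_of_profileGap_eq_zero (hu : u ∈ Ioo 1 (s / 2))
    (h : profileGap c s u = 0) : ProfileSys c s u (s - u) :=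
  ⟨hu.1, by linarith [hu.1, hu.2], by ring, sub_eq_zero.mp h⟩

theorem ProfileSys.cases (h : ProfileSys c s u v) :
    (u = s / 2 ∧ v = s / 2) ∨
      (u ∈ Ioo 1 (s / 2) ∧ v = s - u ∧ profileGap c s u = 0) ∨
      (v ∈ Ioo 1 (s / 2) ∧ u = s - v ∧ profileGap c s v = 0) := by
  obtain ⟨hu, hv, hsum, hprof⟩ := h
  rcases lt_trichotomy u v with huv | rfl | hvu
  · have hv : v = s - u := by linarith
    refine Or.inr (Or.inl ⟨⟨hu, by linarith⟩, hv, ?_⟩)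
    rw [profileGap, ← hv, hprof, sub_self]
  · exact Or.inl ⟨by linarith, by linarith⟩
  · have hu : u = s - v := by linarith
    refine Or.inr (Or.inr ⟨⟨hv, by linarith⟩, hu, ?_⟩)
    rw [profileGap, ← hu, hprof, sub_self]

theorem profileSys_iff_of_le_two_sqrt (hs : 2 < s) (hsc : s ≤ 2 * √c) :
    ProfileSys c s u v ↔ u = s / 2 ∧ v = s / 2 := by
  have hc : 0 ≤ c := (sqrt_pos.mp (by linarith)).le
  have hsc' : s ^ 2 ≤ 4 * c := by
    nlinarith [sq_sqrt hc, pow_le_pow_left₀ (by linarith : 0 ≤ s) hsc 2]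
  constructor
  · intro h
    rcases h.cases with hdiag | ⟨hu, -, hzero⟩ | ⟨hv, -, hzero⟩
    · exact hdiag
    · exact absurd hzero (profileGap_neg hs hsc' hu).ne
    · exact absurd hzero (profileGap_neg hs hsc' hv).ne
  · rintro ⟨rfl, rfl⟩
    exact profileSys_half hs

theorem exists_profileSys_of_two_sqrt_lt (hc : 1 < c) (hsc : 2 * √c < s) :
    ∃ x, x < s - x ∧ ProfileSys c s x (s - x) ∧ ∀ u v, ProfileSys c s u v →
      (u = s / 2 ∧ v = s / 2) ∨ (u = x ∧ v = s - x) ∨ (u = s - x ∧ v = x) := by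
  have hsqrt : 1 < √c := (lt_sqrt zero_le_one).mpr (by simpa using hc)
  have hs : 2 < s := by linarith
  have hsc' : 4 * c < s ^ 2 := by
    nlinarith [sq_sqrt (by linarith : 0 ≤ c), pow_lt_pow_left₀ hsc (by positivity) two_ne_zero]
  obtain ⟨x, hx, hzero⟩ := exists_unique_profileGap_eq_zero hc hs hsc'
  refine ⟨x, by linarith [hx.2], profileSys_of_profileGap_eq_zero hx ((hzero x hx).mpr rfl),
    fun u v h => ?_⟩
  rcases h.cases with hdiag | ⟨hu, hv, hgap⟩ | ⟨hv, hu, hgap⟩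
  · exact Or.inl hdiag
  · obtain rfl := (hzero u hu).mp hgap
    exact Or.inr (Or.inl ⟨rfl, hv⟩)
  · obtain rfl := (hzero v hv).mp hgap
    exact Or.inr (Or.inr ⟨hu, rfl⟩)

theorem signSys_iff_profileSys {p tm tp : ℝ} (hp : 2 < p) :
    SignSys p s tm tp ↔ ProfileSys (p / (p - 2)) s tm⁻¹ tp⁻¹ := by
  have hexp : 1 / (p - 2) = (p / (p - 2) - 1) / 2 := by
    field_simp [(by linarith : p - 2 ≠ 0)]
    ring
  rw [SignSys, ProfileSys, hexp]
  constructor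
  · rintro ⟨htm, htp, hF, hsum⟩
    rw [mul_rpow_eq_exp_profile _ htm, mul_rpow_eq_exp_profile _ htp] at hF
    exact ⟨one_lt_inv_iff₀.mpr htm, one_lt_inv_iff₀.mpr htp,
      by rw [← hsum, one_div, one_div, add_comm], (exp_injective hF).symm⟩
  · rintro ⟨htm, htp, hsum, hprof⟩
    have htm' : tm ∈ Ioo 0 1 := one_lt_inv_iff₀.mp htm
    have htp' : tp ∈ Ioo 0 1 := one_lt_inv_iff₀.mp htp
    refine ⟨htm', htp', ?_, by rw [← hsum, one_div, one_div, add_comm]⟩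
    rw [mul_rpow_eq_exp_profile _ htm', mul_rpow_eq_exp_profile _ htp', hprof]

end SignSys

open SignSys

theorem signSys_trichotomy_general (p s : ℝ) (hp : 2 < p) :
    (s ≤ 2 → ¬ ∃ tm tp : ℝ, SignSys p s tm tp) ∧
    (2 < s → s ≤ 2 * Real.sqrt (p / (p - 2)) →
      ∀ tm tp : ℝ, SignSys p s tm tp ↔ (tm = 2 / s ∧ tp = 2 / s)) ∧
    (2 * Real.sqrt (p / (p - 2)) < s →
      ∃ t₁ t₂ : ℝ, t₁ ≠ t₂ ∧ SignSys p s (2 / s) (2 / s) ∧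
        SignSys p s t₁ t₂ ∧ SignSys p s t₂ t₁ ∧
        ∀ tm tp : ℝ, SignSys p s tm tp →
          (tm = 2 / s ∧ tp = 2 / s) ∨ (tm = t₁ ∧ tp = t₂) ∨ (tm = t₂ ∧ tp = t₁)) := by
  have hc : 1 < p / (p - 2) := (one_lt_div (by linarith)).mpr (by linarith)
  have htwo : 2 / s = (s / 2)⁻¹ := (inv_div s 2).symm
  refine ⟨fun hs ⟨tm, tp, h⟩ => hs.not_gt ((signSys_iff_profileSys hp).mp h).two_lt,
    fun hs hsc tm tp => ?_, fun hsc => ?_⟩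
  · rw [signSys_iff_profileSys hp, profileSys_iff_of_le_two_sqrt hs hsc, htwo,
      inv_eq_iff_eq_inv, inv_eq_iff_eq_inv]
  obtain ⟨x, hlt, hx, hsol⟩ := exists_profileSys_of_two_sqrt_lt hc hsc
  refine ⟨x⁻¹, (s - x)⁻¹, inv_injective.ne hlt.ne, ?_, ?_, ?_, fun tm tp h => ?_⟩
  · rw [signSys_iff_profileSys hp, htwo, inv_inv]
    exact profileSys_half hx.two_lt
  · rwa [signSys_iff_profileSys hp, inv_inv, inv_inv]
  · rw [signSys_iff_profileSys hp, inv_inv, inv_inv]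
    exact hx.symm
  · simpa only [htwo, inv_eq_iff_eq_inv] using hsol _ _ ((signSys_iff_profileSys hp).mp h)

/-- for p > 2 and s > 0: (a) if s ≤ 2 the system has no solutions; (b) if
`2 < s ≤ 2√(p/(p−2))` the only solution is `t₋ = t₊ = 2/s`; (c) if `s > 2√(p/(p−2))`
there are exactly three solutions: `t₋ = t₊ = 2/s` and a pair `(t₁,t₂)`, `(t₂,t₁)` with
`t₁ ≠ t₂`. -/
theorem signSys_trichotomy (p s : ℝ) (hp : 2 < p) (hs : 0 < s) :
    (s ≤ 2 → ¬ ∃ tm tp : ℝ, SignSys p s tm tp) ∧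
    (2 < s → s ≤ 2 * Real.sqrt (p / (p - 2)) →
      ∀ tm tp : ℝ, SignSys p s tm tp ↔ (tm = 2 / s ∧ tp = 2 / s)) ∧
    (2 * Real.sqrt (p / (p - 2)) < s →
      ∃ t₁ t₂ : ℝ, t₁ ≠ t₂ ∧ SignSys p s (2 / s) (2 / s) ∧
        SignSys p s t₁ t₂ ∧ SignSys p s t₂ t₁ ∧
        ∀ tm tp : ℝ, SignSys p s tm tp →
          (tm = 2 / s ∧ tp = 2 / s) ∨ (tm = t₁ ∧ tp = t₂) ∨ (tm = t₂ ∧ tp = t₁)) :=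
  signSys_trichotomy_general p s hp
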